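/- Symmetry of data comparison in G: for every nominal i, all path expressions α,β, and every comparison ▲ ∈ {=_c, ≠_c}, the sequent ⊢ @_i(⟨α ▲ β⟩ ↔ ⟨β ▲ α⟩) (with empty antecedent) is provable in G. -/

import Mathlib

namespace HXPathD

mutual
  inductive Path (P N M C : Type) : Type where
    | mod  : M → Path P N M C
    | nom  : N → Path P N M C
    | test : Node P N M C → Path P N M C
    | comp : Path P N M C → Path P N M C → Path P N M C

  inductive Node (P N M C : Type) : Type where
    | prop : P → Node P N M C
    | nom  : N → Node P N M C
    | bot  : Node P N M C
    | impl : Node P N M C → Node P N M C → Node P N M C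
    | at   : N → Node P N M C → Node P N M C
    | dia  : M → Node P N M C → Node P N M C
    | eq   : Path P N M C → C → Path P N M C → Node P N M C
    | neq  : Path P N M C → C → Path P N M C → Node P N M C
end

variable {P N M C : Type}

/-- Abbreviations. -/
def Node.neg (φ : Node P N M C) : Node P N M C := .impl φ .bot
def Node.top : Node P N M C := .impl .bot .bot
def Node.and (φ ψ : Node P N M C) : Node P N M C := .neg (.impl φ (.neg ψ))
def Node.iff (φ ψ : Node P N M C) : Node P N M C := .and (.impl φ ψ) (.impl ψ φ)
def Node.box (a : M) (φ : Node P N M C) : Node P N M C := .neg (.dia a (.neg φ))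
def Path.eps : Path P N M C := .test .top

/-- The node expression ⟨α⟩φ, obtained by the abbreviations
    ⟨j:⟩φ := @_jφ, ⟨ψ?⟩φ := ψ∧φ, ⟨αβ⟩φ := ⟨α⟩⟨β⟩φ (with ⟨a⟩φ primitive). -/
def Path.dia : Path P N M C → Node P N M C → Node P N M C
  | .mod a, φ => .dia a φ
  | .nom j, φ => .at j φ
  | .test ψ, φ => .and ψ φ
  | .comp α β, φ => α.dia (β.dia φ)

/-- A comparison ▲ ∈ {=_c, ≠_c : c ∈ Cmp}. -/
inductive Comparison (C : Type) : Type where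
  | ceq  : C → Comparison C
  | cneq : C → Comparison C

/-- The node expression ⟨α ▲ β⟩. -/
def Comparison.node : Comparison C → Path P N M C → Path P N M C → Node P N M C
  | .ceq c, α, β => .eq α c β
  | .cneq c, α, β => .neq α c β

/-- A hybrid data model. -/
structure Model (P N M C : Type) where
  W : Type
  nonempty : Nonempty W
  R : M → W → W → Prop
  E : C → W → W → Prop
  E_equiv : ∀ c, Equivalence (E c)
  g : N → W
  V : P → W → Prop

mutual
  def Model.satPath (𝔐 : Model P N M C) : Path P N M C → 𝔐.W → 𝔐.W → Prop
    | .mod a, n, n' => 𝔐.R a n n'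
    | .nom i, _, n' => 𝔐.g i = n'
    | .test φ, n, n' => n = n' ∧ 𝔐.sat φ n
    | .comp α β, n, n' => ∃ n'', 𝔐.satPath α n n'' ∧ 𝔐.satPath β n'' n'

  def Model.sat (𝔐 : Model P N M C) : Node P N M C → 𝔐.W → Prop
    | .prop p, n => 𝔐.V p n
    | .nom i, n => 𝔐.g i = n
    | .bot, _ => False
    | .impl φ ψ, n => 𝔐.sat φ n → 𝔐.sat ψ n
    | .at i φ, _ => 𝔐.sat φ (𝔐.g i)
    | .dia a φ, n => ∃ n', 𝔐.R a n n' ∧ 𝔐.sat φ n'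
    | .eq α c β, n => ∃ n' n'', 𝔐.satPath α n n' ∧ 𝔐.satPath β n n'' ∧ 𝔐.E c n' n''
    | .neq α c β, n => ∃ n' n'', 𝔐.satPath α n n' ∧ 𝔐.satPath β n n'' ∧ ¬ 𝔐.E c n' n''
end

mutual
  def Path.noms : Path P N M C → Set N
    | .mod _ => ∅
    | .nom i => {i}
    | .test φ => φ.noms
    | .comp α β => α.noms ∪ β.noms

  def Node.noms : Node P N M C → Set N
    | .prop _ => ∅
    | .nom i => {i}
    | .bot => ∅
    | .impl φ ψ => φ.noms ∪ ψ.noms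
    | .at i φ => insert i φ.noms
    | .dia _ φ => φ.noms
    | .eq α _ β => α.noms ∪ β.noms
    | .neq α _ β => α.noms ∪ β.noms
end

/-- Node expressions of the admissible forms for sequents:
    ⟨i: ▲ j:⟩ or @_iφ. -/
def Node.Admissible : Node P N M C → Prop
  | .at _ _ => True
  | .eq (.nom _) _ (.nom _) => True
  | .neq (.nom _) _ (.nom _) => True
  | _ => False

/-- A sequent: antecedent and consequent. -/
abbrev Sequent (P N M C : Type) := Set (Node P N M C) × Set (Node P N M C)

/-- The nominal `j` does not occur in the set `S`. -/
def FreshIn (j : N) (S : Set (Node P N M C)) : Prop := ∀ φ ∈ S, j ∉ φ.noms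

/-- Shape restriction on the axiom (Ax). -/
inductive AxForm : Node P N M C → Prop where
  | prop (i : N) (p : P) : AxForm (.at i (.prop p))
  | nom (i j : N) : AxForm (.at i (.nom j))
  | eq (i : N) (c : C) (j : N) : AxForm (.eq (.nom i) c (.nom j))

/-- Shape restriction on the rule (S1): φ is p, ⊥ or ⟨a⟩k. -/
inductive S1Form : Node P N M C → Prop where
  | prop (p : P) : S1Form (.prop p)
  | bot : S1Form .bot
  | dia (a : M) (k : N) : S1Form (.dia a (.nom k))

/-- One rule instance of the sequent calculus G: `Step cut prems concl` holds iff
    `concl` may be inferred from the premisses `prems` by a rule of G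
    (when `cut = false`, the rule (Cut) is excluded). -/
inductive Step (cut : Bool) : List (Sequent P N M C) → Sequent P N M C → Prop where
  | ax {Γ Δ : Set (Node P N M C)} {φ} (h : AxForm φ) :
      Step cut [] (insert φ Γ, insert φ Δ)
  | bot {Γ Δ : Set (Node P N M C)} (i : N) :
      Step cut [] (insert (.at i .bot) Γ, Δ)
  | implL {Γ Δ : Set (Node P N M C)} (i : N) (φ ψ : Node P N M C) :
      Step cut [(Γ, insert (.at i φ) Δ), (insert (.at i ψ) Γ, Δ)]
        (insert (.at i (.impl φ ψ)) Γ, Δ)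
  | implR {Γ Δ : Set (Node P N M C)} (i : N) (φ ψ : Node P N M C) :
      Step cut [(insert (.at i φ) Γ, insert (.at i ψ) Δ)]
        (Γ, insert (.at i (.impl φ ψ)) Δ)
  | atT {Γ Δ : Set (Node P N M C)} (i : N) :
      Step cut [(insert (.at i (.nom i)) Γ, Δ)] (Γ, Δ)
  | at5 {Γ Δ : Set (Node P N M C)} (i j k : N) :
      Step cut
        [(insert (.at j (.nom k)) (insert (.at i (.nom j)) (insert (.at i (.nom k)) Γ)), Δ)]
        (insert (.at i (.nom j)) (insert (.at i (.nom k)) Γ), Δ)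
  | nomRule {Γ Δ : Set (Node P N M C)} (i j : N)
      (hj : FreshIn j Γ) (hj' : FreshIn j Δ) :
      Step cut [(insert (.at i (.nom j)) Γ, Δ)] (Γ, Δ)
  | s1 {Γ Δ : Set (Node P N M C)} (i j : N) {φ : Node P N M C} (h : S1Form φ) :
      Step cut
        [(insert (.at j φ) (insert (.at i (.nom j)) (insert (.at i φ) Γ)), Δ)]
        (insert (.at i (.nom j)) (insert (.at i φ) Γ), Δ)
  | s2 {Γ Δ : Set (Node P N M C)} (i j k : N) (a : M) :
      Step cut
        [(insert (.at i (.dia a (.nom k)))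
            (insert (.at j (.nom k)) (insert (.at i (.dia a (.nom j))) Γ)), Δ)]
        (insert (.at j (.nom k)) (insert (.at i (.dia a (.nom j))) Γ), Δ)
  | s3 {Γ Δ : Set (Node P N M C)} (i j k : N) (c : C) :
      Step cut
        [(insert (.eq (.nom j) c (.nom k))
            (insert (.at i (.nom j)) (insert (.eq (.nom i) c (.nom k)) Γ)), Δ)]
        (insert (.at i (.nom j)) (insert (.eq (.nom i) c (.nom k)) Γ), Δ)
  | atL {Γ Δ : Set (Node P N M C)} (i j : N) (φ : Node P N M C) :
      Step cut [(insert (.at i φ) Γ, Δ)] (insert (.at j (.at i φ)) Γ, Δ)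
  | atR {Γ Δ : Set (Node P N M C)} (i j : N) (φ : Node P N M C) :
      Step cut [(Γ, insert (.at i φ) Δ)] (Γ, insert (.at j (.at i φ)) Δ)
  | diaL {Γ Δ : Set (Node P N M C)} (i j : N) (a : M) (φ : Node P N M C)
      (hj : FreshIn j (insert (.at i (.dia a φ)) Γ)) (hj' : FreshIn j Δ) :
      Step cut
        [(insert (.at i (.dia a (.nom j))) (insert (.at j φ) Γ), Δ)]
        (insert (.at i (.dia a φ)) Γ, Δ)
  | diaR {Γ Δ : Set (Node P N M C)} (i j : N) (a : M) (φ : Node P N M C) :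
      Step cut
        [(insert (.at i (.dia a (.nom j))) Γ,
          insert (.at i (.dia a φ)) (insert (.at j φ) Δ))]
        (insert (.at i (.dia a (.nom j))) Γ, insert (.at i (.dia a φ)) Δ)
  | cmpL {Γ Δ : Set (Node P N M C)} (i j k : N) (α β : Path P N M C)
      (b : Comparison C) (hjk : j ≠ k)
      (hj : FreshIn j (insert (.at i (b.node α β)) Γ)) (hj' : FreshIn j Δ)
      (hk : FreshIn k (insert (.at i (b.node α β)) Γ)) (hk' : FreshIn k Δ) :
      Step cut
        [(insert (.at i (α.dia (.nom j)))
            (insert (.at i (β.dia (.nom k)))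
              (insert (b.node (.nom j) (.nom k)) Γ)), Δ)]
        (insert (.at i (b.node α β)) Γ, Δ)
  | cmpR {Γ Δ : Set (Node P N M C)} (i j k : N) (α β : Path P N M C)
      (b : Comparison C) :
      Step cut
        [(insert (.at i (α.dia (.nom j))) (insert (.at i (β.dia (.nom k))) Γ),
          insert (.at i (b.node α β)) (insert (b.node (.nom j) (.nom k)) Δ))]
        (insert (.at i (α.dia (.nom j))) (insert (.at i (β.dia (.nom k))) Γ),
          insert (.at i (b.node α β)) Δ)
  | eqT {Γ Δ : Set (Node P N M C)} (i : N) (c : C) :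
      Step cut [(insert (.eq (.nom i) c (.nom i)) Γ, Δ)] (Γ, Δ)
  | eq5 {Γ Δ : Set (Node P N M C)} (i j k : N) (c : C) :
      Step cut
        [(insert (.eq (.nom j) c (.nom k))
            (insert (.eq (.nom i) c (.nom j)) (insert (.eq (.nom i) c (.nom k)) Γ)), Δ)]
        (insert (.eq (.nom i) c (.nom j)) (insert (.eq (.nom i) c (.nom k)) Γ), Δ)
  | neqL {Γ Δ : Set (Node P N M C)} (i j : N) (c : C) :
      Step cut [(Γ, insert (.eq (.nom i) c (.nom j)) Δ)]
        (insert (.neq (.nom i) c (.nom j)) Γ, Δ)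
  | neqR {Γ Δ : Set (Node P N M C)} (i j : N) (c : C) :
      Step cut [(insert (.eq (.nom i) c (.nom j)) Γ, Δ)]
        (Γ, insert (.neq (.nom i) c (.nom j)) Δ)
  | cutRule {Γ Δ Γ' Δ' : Set (Node P N M C)} (φ : Node P N M C)
      (ha : φ.Admissible) (hc : cut = true) :
      Step cut [(Γ, insert φ Δ), (insert φ Γ', Δ')] (Γ ∪ Γ', Δ ∪ Δ')
  | wl {Γ Δ : Set (Node P N M C)} (φ : Node P N M C) (ha : φ.Admissible) :
      Step cut [(Γ, Δ)] (insert φ Γ, Δ)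
  | wr {Γ Δ : Set (Node P N M C)} (φ : Node P N M C) (ha : φ.Admissible) :
      Step cut [(Γ, Δ)] (Γ, insert φ Δ)

/-- Derivability in G (`Deriv true`) resp. in G without (Cut) (`Deriv false`):
    a derivation built from the rules whose leaves are instances of the
    zero-premiss rules (Ax) or (⊥). -/
inductive Deriv (cut : Bool) : Sequent P N M C → Prop where
  | step {prems : List (Sequent P N M C)} {concl : Sequent P N M C}
      (h : Step cut prems concl) (ih : ∀ s ∈ prems, Deriv cut s) : Deriv cut concl

/-- Γ ⊢_G Δ : the sequent is provable in G. -/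
def ProvableG (Γ Δ : Set (Node P N M C)) : Prop := Deriv true (Γ, Δ)

/-- M ⊩ φ : global satisfaction. -/
def Model.satG (𝔐 : Model P N M C) (φ : Node P N M C) : Prop := ∀ n, 𝔐.sat φ n

/-- Validity of a sequent. -/
def ValidSeq (S : Sequent P N M C) : Prop :=
  ∀ 𝔐 : Model P N M C, (∀ γ ∈ S.1, 𝔐.satG γ) → ∃ δ ∈ S.2, 𝔐.satG δ

/-- Formulas of the basic hybrid logic H(@): no data comparisons. -/
def Node.IsHybrid : Node P N M C → Prop
  | .prop _ => True
  | .nom _ => True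
  | .bot => True
  | .impl φ ψ => φ.IsHybrid ∧ ψ.IsHybrid
  | .at _ φ => φ.IsHybrid
  | .dia _ φ => φ.IsHybrid
  | .eq _ _ _ => False
  | .neq _ _ _ => False

mutual
  theorem Path.noms_finite : ∀ α : Path P N M C, α.noms.Finite
    | .mod _ => Set.finite_empty
    | .nom _ => Set.finite_singleton _
    | .test φ => Node.noms_finite φ
    | .comp α β => (Path.noms_finite α).union (Path.noms_finite β)

  theorem Node.noms_finite : ∀ φ : Node P N M C, φ.noms.Finite
    | .prop _ => Set.finite_empty
    | .nom _ => Set.finite_singleton _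
    | .bot => Set.finite_empty
    | .impl φ ψ => (Node.noms_finite φ).union (Node.noms_finite ψ)
    | .at i φ => (Node.noms_finite φ).insert i
    | .dia _ φ => Node.noms_finite φ
    | .eq α _ β => (Path.noms_finite α).union (Path.noms_finite β)
    | .neq α _ β => (Path.noms_finite α).union (Path.noms_finite β)
end

theorem Comparison.noms_node_comm (b : Comparison C) (α β : Path P N M C) :
    (b.node α β).noms = (b.node β α).noms := by
  cases b <;> exact Set.union_comm _ _

namespace Deriv

variable {cut : Bool} {Γ Δ : Set (Node P N M C)}

theorem of_step₀ {S : Sequent P N M C} (h : Step cut [] S) : Deriv cut S :=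
  step h (by simp)

theorem of_step₁ {S T : Sequent P N M C} (h : Step cut [S] T) (d : Deriv cut S) :
    Deriv cut T :=
  step h (by simpa using d)

theorem of_step₂ {S₁ S₂ T : Sequent P N M C} (h : Step cut [S₁, S₂] T)
    (d₁ : Deriv cut S₁) (d₂ : Deriv cut S₂) : Deriv cut T :=
  step h (by simpa using ⟨d₁, d₂⟩)

theorem congr {Γ' Δ' : Set (Node P N M C)} (d : Deriv cut (Γ, Δ)) (hΓ : Γ = Γ')
    (hΔ : Δ = Δ') : Deriv cut (Γ', Δ') :=
  hΓ ▸ hΔ ▸ d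

theorem eq_symm (j k : N) (c : C) :
    Deriv cut (insert (.eq (.nom j) c (.nom k)) Γ, insert (.eq (.nom k) c (.nom j)) Δ) :=
  of_step₁ (.eqT j c) ((of_step₁ (.eq5 j k j c) (of_step₀ (.ax (.eq k c j)))).congr
    (Set.insert_comm _ _ _) rfl)

theorem neq_symm (j k : N) (c : C) :
    Deriv cut (insert (.neq (.nom j) c (.nom k)) Γ, insert (.neq (.nom k) c (.nom j)) Δ) :=
  of_step₁ (.neqR k j c) ((of_step₁ (.neqL j k c) (eq_symm k j c)).congr
    (Set.insert_comm _ _ _) rfl)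

theorem cmp_nom_symm (b : Comparison C) (j k : N) :
    Deriv cut (insert (b.node (.nom j) (.nom k)) Γ, insert (b.node (.nom k) (.nom j)) Δ) := by
  cases b with
  | ceq c => exact eq_symm j k c
  | cneq c => exact neq_symm j k c

theorem and_right (i : N) (φ ψ : Node P N M C) (hφ : Deriv cut (Γ, insert (.at i φ) Δ))
    (hψ : Deriv cut (Γ, insert (.at i ψ) Δ)) : Deriv cut (Γ, insert (.at i (φ.and ψ)) Δ) := by
  have weaken_by_bot : ∀ {χ}, Deriv cut (Γ, insert (.at i χ) Δ) →
      Deriv cut (Γ, insert (.at i χ) (insert (.at i .bot) Δ)) := fun d =>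
    (of_step₁ (.wr (.at i .bot) trivial) d).congr rfl (Set.insert_comm _ _ _)
  refine of_step₁ (.implR i _ .bot) (of_step₂ (.implL i φ ψ.neg) (weaken_by_bot hφ) ?_)
  exact of_step₂ (.implL i ψ .bot) (weaken_by_bot hψ) (of_step₀ (.bot i))

/-- (⟨▲⟩L) unfolds the antecedent with fresh witnesses `j, k`; (⟨▲⟩R), fed the same witnesses
in swapped order, reduces the succedent to `⟨k: ▲ j:⟩`, which follows from `⟨j: ▲ k:⟩`. -/
theorem cmp_symm [Infinite N] (i : N) (α β : Path P N M C) (b : Comparison C) :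
    Deriv cut ({.at i (b.node α β)}, {.at i (b.node β α)}) := by
  obtain ⟨j, hj, k, hk, hjk⟩ :=
    (Node.noms_finite (.at i (b.node α β))).infinite_compl.nontrivial
  have fresh_left : ∀ {m}, m ∉ (Node.at i (b.node α β)).noms →
      FreshIn m (insert (.at i (b.node α β)) ∅) := fun hm => by
    simpa [FreshIn] using hm
  have fresh_right : ∀ {m}, m ∉ (Node.at i (b.node α β)).noms →
      FreshIn m {.at i (b.node β α)} := fun hm => by
    simpa [FreshIn, Node.noms, Comparison.noms_node_comm] using hm
  have nominals_swapped : Deriv cut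
      ({.at i (β.dia (.nom k)), .at i (α.dia (.nom j)), b.node (.nom j) (.nom k)},
        {.at i (b.node β α), b.node (.nom k) (.nom j)}) :=
    (cmp_nom_symm (Γ := {.at i (β.dia (.nom k)), .at i (α.dia (.nom j))})
      (Δ := {.at i (b.node β α)}) b j k).congr (by ext; simp; tauto) (Set.pair_comm _ _)
  have right_unfolded : Deriv cut
      ({.at i (β.dia (.nom k)), .at i (α.dia (.nom j)), b.node (.nom j) (.nom k)},
        {.at i (b.node β α)}) :=
    (of_step₁ (.cmpR (Δ := ∅) i k j β α b) (nominals_swapped.congr rfl (by simp))).congr rfl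
      (by simp)
  refine (of_step₁ (.cmpL (Γ := ∅) i j k α β b hjk (fresh_left hj) (fresh_right hj)
    (fresh_left hk) (fresh_right hk)) (right_unfolded.congr (by ext; simp; tauto) rfl)).congr
    (by simp) rfl

end Deriv

/-- symmetry of data comparison in G: ⊢ @_i(⟨α ▲ β⟩ ↔ ⟨β ▲ α⟩). -/
theorem cmp_symm_provable {P N M C : Type} [Countable P] [Infinite P] [Countable N] [Infinite N] [Finite M] [Finite C]
    (i : N) (α β : Path P N M C) (b : Comparison C) :
    ProvableG (∅ : Set (Node P N M C))
      {Node.at i (Node.iff (b.node α β) (b.node β α))} := by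
  have implies : ∀ γ δ : Path P N M C,
      Deriv true (∅, insert (Node.at i ((b.node γ δ).impl (b.node δ γ))) ∅) := fun γ δ =>
    .of_step₁ (.implR i _ _) ((Deriv.cmp_symm i γ δ b).congr (by simp) (by simp))
  exact (Deriv.and_right i _ _ (implies α β) (implies β α)).congr rfl (insert_empty_eq _)

end HXPathD
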